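/- arXiv:1812.07876 — 2 statements merged into one kernel-verified Lean document; each statement's English description precedes it below -/
import Mathlib

section
/- The Dynin-Folland Lie algebra 𝔥_{n,2} is nilpotent of step 3 (all triple brackets [A,[B,[C,D]]] vanish while some double bracket is nonzero), and its centre equals ℝ·X_s. -/
/-!
The bracket of any two elements lies in the span of `X_w`, the `X_{x_j}`, the `X_{y_j}` and `X_s`,
and bracketing anything with such an element lands in `ℝ·X_s`, which is central; since
`[X_z, [X_{u_1}, X_{v_1}]] = -X_s`, the step is exactly three. The `X_s`-component of `[A, B]` is
`⟨𝒫_A, 𝒬_B⟩ - ⟨𝒬_A, 𝒫_B⟩`, a nondegenerate pairing, so a central element has `𝒫 = 𝒬 = 0`.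
-/

noncomputable section

abbrev Hgrp (n : ℕ) := (Fin n → ℝ) × (Fin n → ℝ) × ℝ

def hdot {n : ℕ} (p q : Fin n → ℝ) : ℝ := ∑ i, p i * q i

/-- The Heisenberg group law on `ℝ^{2n+1}`. -/
def hmul {n : ℕ} (X Y : Hgrp n) : Hgrp n :=
  (X.1 + Y.1, X.2.1 + Y.2.1,
    X.2.2 + Y.2.2 + (1 / 2) * (hdot X.1 Y.2.1 - hdot X.2.1 Y.1))

/-- The Heisenberg Lie bracket on `ℝ^{2n+1}`. -/
def hbr {n : ℕ} (X Y : Hgrp n) : Hgrp n := (0, 0, hdot X.1 Y.2.1 - hdot X.2.1 Y.1)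

/-- `ad*(𝒫)(𝒬') = (z'v, -z'u, 0)` for `𝒫 = (u,v,w)`, `𝒬' = (x',y',z')`. -/
def adstar {n : ℕ} (P Q : Hgrp n) : Hgrp n := (Q.2.2 • P.2.1, -(Q.2.2 • P.1), 0)

/-- The standard inner product on `ℝ^{2n+1}`. -/
def hinner {n : ℕ} (X Y : Hgrp n) : ℝ := hdot X.1 Y.1 + hdot X.2.1 Y.2.1 + X.2.2 * Y.2.2

/-- Elements `(𝒫, 𝒬, 𝒮)` of the Dynin-Folland Lie algebra/group. -/
abbrev DF (n : ℕ) := Hgrp n × Hgrp n × ℝ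

/-- The Dynin-Folland Lie bracket. -/
def dfbr {n : ℕ} (A B : DF n) : DF n :=
  (hbr A.1 B.1,
   (1 / 2 : ℝ) • (adstar A.1 B.2.1 - adstar B.1 A.2.1),
   hinner A.1 B.2.1 - hinner A.2.1 B.1)

/-- The Dynin-Folland group law. -/
def dfmul {n : ℕ} (A B : DF n) : DF n :=
  (hmul A.1 B.1,
   A.2.1 + B.2.1 + (1 / 4 : ℝ) • (adstar A.1 B.2.1 - adstar B.1 A.2.1),
   A.2.2 + B.2.2 + (1 / 2) * (hinner A.1 B.2.1 - hinner A.2.1 B.1)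
     - (1 / 8) * hinner (A.2.1 - B.2.1) (hbr A.1 B.1))

section

variable {n : ℕ}

lemma hdot_self_nonneg (p : Fin n → ℝ) : 0 ≤ hdot p p :=
  Finset.sum_nonneg fun i _ => mul_self_nonneg (p i)

lemma hdot_self_eq_zero {p : Fin n → ℝ} : hdot p p = 0 ↔ p = 0 :=
  dotProduct_self_eq_zero

lemma hinner_self_eq_zero {X : Hgrp n} : hinner X X = 0 ↔ X = 0 := by
  obtain ⟨u, v, w⟩ := X
  have huv := add_nonneg (hdot_self_nonneg u) (hdot_self_nonneg v)
  simp only [hinner, add_eq_zero_iff_of_nonneg huv (mul_self_nonneg w),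
    add_eq_zero_iff_of_nonneg (hdot_self_nonneg u) (hdot_self_nonneg v), hdot_self_eq_zero,
    mul_self_eq_zero, Prod.mk_eq_zero, and_assoc]

@[simp]
lemma hinner_zero_left (X : Hgrp n) : hinner 0 X = 0 := by
  simp [hinner, hdot]

@[simp]
lemma hinner_zero_right (X : Hgrp n) : hinner X 0 = 0 := by
  simp [hinner, hdot]

lemma dfbr_central_left (s : ℝ) (B : DF n) : dfbr (0, 0, s) B = 0 := by
  simp [dfbr, hbr, adstar, hinner, hdot]

lemma dfbr_central_right (A : DF n) (s : ℝ) : dfbr A (0, 0, s) = 0 := by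
  simp [dfbr, hbr, adstar, hinner, hdot]

lemma exists_dfbr_eq_central (B E : DF n) (hu : E.1.1 = 0) (hv : E.1.2.1 = 0)
    (hz : E.2.1.2.2 = 0) : ∃ s, dfbr B E = (0, 0, s) := by
  obtain ⟨⟨u, v, w⟩, ⟨x, y, z⟩, s⟩ := E
  simp only at hu hv hz
  subst hu hv hz
  refine ⟨_, Prod.ext ?_ (Prod.ext ?_ rfl)⟩ <;> simp [dfbr, hbr, adstar, hdot]

lemma exists_dfbr_dfbr_eq_central (B C D : DF n) : ∃ s, dfbr B (dfbr C D) = (0, 0, s) :=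
  exists_dfbr_eq_central B _ rfl rfl (by simp [dfbr, adstar])

lemma forall_dfbr_eq_zero_iff (A : DF n) : (∀ B, dfbr A B = 0) ↔ ∃ s : ℝ, A = (0, 0, s) := by
  refine ⟨fun h => ⟨A.2.2, ?_⟩, fun ⟨s, hA⟩ B => hA ▸ dfbr_central_left s B⟩
  obtain ⟨P, Q, s⟩ := A
  have hP : hinner P P = 0 := by
    simpa [dfbr] using congrArg (·.2.2) (h (0, P, 0))
  have hQ : hinner Q Q = 0 := by
    simpa [dfbr] using congrArg (·.2.2) (h (Q, 0, 0))
  rw [hinner_self_eq_zero] at hP hQ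
  rw [hP, hQ]

def Xu (i : Fin n) : DF n := ((Pi.single i 1, 0, 0), 0, 0)

def Xv (i : Fin n) : DF n := ((0, Pi.single i 1, 0), 0, 0)

def Xw : DF n := ((0, 0, 1), 0, 0)

def Xz : DF n := (0, (0, 0, 1), 0)

lemma dfbr_Xu_Xv (i : Fin n) : dfbr (Xu i) (Xv i) = Xw := by
  simp [dfbr, Xu, Xv, Xw, hbr, adstar, hinner, hdot, Pi.single_apply]

lemma dfbr_Xz_Xw : dfbr Xz Xw = ((0, 0, -1) : DF n) := by
  simp [dfbr, Xz, Xw, hbr, adstar, hinner, hdot]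

end

/-- The Dynin-Folland Lie algebra is nilpotent of step 3 and its centre is `ℝ·X_s`. -/
theorem dynin_folland_step_three_and_centre (n : ℕ) (hn : 0 < n) :
    (∀ A B C D : DF n, dfbr A (dfbr B (dfbr C D)) = 0) ∧
    (∃ B C D : DF n, dfbr B (dfbr C D) ≠ 0) ∧
    {A : DF n | ∀ B : DF n, dfbr A B = 0} = {A : DF n | ∃ s : ℝ, A = (0, 0, s)} := by
  refine ⟨fun A B C D => ?_, ⟨Xz, Xu ⟨0, hn⟩, Xv ⟨0, hn⟩, ?_⟩, ?_⟩
  · obtain ⟨s, hs⟩ := exists_dfbr_dfbr_eq_central B C D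
    rw [hs, dfbr_central_right]
  · rw [dfbr_Xu_Xv, dfbr_Xz_Xw]
    simp
  · ext A
    exact forall_dfbr_eq_zero_iff A
end
end

section
/- For each λ ∈ ℝ∖{0}, the map π_λ defined by (π_λ(𝒫,𝒬,𝒮) f)(X) = e^{2πiλ(𝒮 + ⟨𝒬, X⊙((1/2)𝒫)⟩)} f(X⊙𝒫) defines a unitary representation of the Dynin-Folland group 𝐇_{n,2} on L²(ℝ^{2n+1}): each operator is unitary and π_λ(g)π_λ(g') = π_λ(g·g'). -/
open Real Complex MeasureTheory

noncomputable section

/-- The generic representation `π_l` of the Dynin-Folland group: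
`(π_l(𝒫,𝒬,𝒮) f)(X) = e^{2πil(𝒮 + ⟨𝒬, X⊙((1/2)𝒫)⟩)} f(X⊙𝒫)`. -/
def piAct (n : ℕ) (l : ℝ) (g : DF n) (f : Hgrp n → ℂ) : Hgrp n → ℂ :=
  fun X => Complex.exp (2 * (π : ℂ) * Complex.I * (l : ℂ) *
      ((g.2.2 : ℂ) + (hinner g.2.1 (hmul X ((1 / 2 : ℝ) • g.1)) : ℂ))) * f (hmul X g.1)

/-!
Each `π_λ(g)` is right translation by `𝒫` in `𝐇_n` followed by multiplication by a unimodular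
phase. Right translation in `𝐇_n` preserves Lebesgue measure (it is a translation composed with a
shear in the central coordinate), so every `π_λ(g)` is an `L²`-isometry. The homomorphism property
reduces to the associativity of `⊙` and to the cocycle identity
`piPhase g X + piPhase g' (X ⊙ 𝒫) = piPhase (g g') X` for the phase, a polynomial identity in
the coordinates.
-/

namespace MeasureTheory.MeasurePreserving

theorem skew_product_add {α β G : Type*} [MeasurableSpace α] [MeasurableSpace β]
    [MeasurableSpace G] [AddGroup G] [MeasurableAdd₂ G] {μa : Measure α} {μb : Measure β}
    {ν : Measure G} [SFinite μa] [SFinite ν] [ν.IsAddRightInvariant] {f : α → β}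
    (hf : MeasurePreserving f μa μb) {φ : α → G} (hφ : Measurable φ) :
    MeasurePreserving (fun p : α × G => (f p.1, p.2 + φ p.1)) (μa.prod ν) (μb.prod ν) :=
  hf.skew_product (measurable_snd.add (hφ.comp measurable_fst))
    (ae_of_all _ fun a => (measurePreserving_add_right ν (φ a)).map_eq)

end MeasureTheory.MeasurePreserving

section HeisenbergGroup

variable {n : ℕ}

lemma hdot_eq_dotProduct (a b : Fin n → ℝ) : hdot a b = a ⬝ᵥ b := rfl

lemma hmul_assoc (X Y Z : Hgrp n) : hmul (hmul X Y) Z = hmul X (hmul Y Z) := by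
  simp only [hmul, hdot_eq_dotProduct, add_dotProduct, dotProduct_add, Prod.mk.injEq]
  exact ⟨add_assoc .., add_assoc .., by ring⟩

lemma hmul_zero (X : Hgrp n) : hmul X 0 = X := by
  simp [hmul, hdot_eq_dotProduct]

lemma hmul_neg_self (X : Hgrp n) : hmul X (-X) = 0 := by
  simp [hmul, hdot_eq_dotProduct, dotProduct_comm X.1]

lemma neg_hmul_self (X : Hgrp n) : hmul (-X) X = 0 := by
  simpa using hmul_neg_self (-X)

lemma measurePreserving_hmul_right (P : Hgrp n) :
    MeasurePreserving (fun X : Hgrp n => hmul X P) := by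
  -- `X ↦ X ⊙ P` is a shear over the translation of `(X.1, X.2.1)`, once `Hgrp n` is regrouped
  -- as `((Fin n → ℝ) × (Fin n → ℝ)) × ℝ`.
  have hφ : Measurable fun x : (Fin n → ℝ) × (Fin n → ℝ) =>
      P.2.2 + (1 / 2) * (hdot x.1 P.2.1 - hdot x.2 P.1) := by
    unfold hdot; fun_prop
  have skew := ((measurePreserving_add_right volume P.1).prod
    (measurePreserving_add_right volume P.2.1)).skew_product_add (ν := (volume : Measure ℝ)) hφ
  have assoc := measurePreserving_prodAssoc (volume : Measure (Fin n → ℝ))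
    (volume : Measure (Fin n → ℝ)) (volume : Measure ℝ)
  show MeasurePreserving _ (volume.prod (volume.prod volume)) (volume.prod (volume.prod volume))
  convert assoc.comp (skew.comp assoc.symm) using 1
  funext X
  exact Prod.ext rfl (Prod.ext rfl (add_assoc _ _ _))

def hmulRight (P : Hgrp n) : Hgrp n ≃ᵐ Hgrp n where
  toFun X := hmul X P
  invFun X := hmul X (-P)
  left_inv X := by simp only [hmul_assoc, hmul_neg_self, hmul_zero]
  right_inv X := by simp only [hmul_assoc, neg_hmul_self, hmul_zero]
  measurable_toFun := (measurePreserving_hmul_right P).measurable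
  measurable_invFun := (measurePreserving_hmul_right (-P)).measurable

lemma integral_comp_hmul_right {E : Type*} [NormedAddCommGroup E] [NormedSpace ℝ E]
    (P : Hgrp n) (f : Hgrp n → E) :
    ∫ X, f (hmul X P) = ∫ X, f X :=
  (measurePreserving_hmul_right P).integral_comp (hmulRight P).measurableEmbedding f

def piPhase (g : DF n) (X : Hgrp n) : ℝ := g.2.2 + hinner g.2.1 (hmul X ((1 / 2 : ℝ) • g.1))

lemma piAct_apply (l : ℝ) (g : DF n) (f : Hgrp n → ℂ) (X : Hgrp n) :
    piAct n l g f X = exp (↑(2 * π * l * piPhase g X) * I) * f (hmul X g.1) := by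
  simp only [piAct, piPhase]
  push_cast
  ring_nf

lemma norm_piAct_apply (l : ℝ) (g : DF n) (f : Hgrp n → ℂ) (X : Hgrp n) :
    ‖piAct n l g f X‖ = ‖f (hmul X g.1)‖ := by
  rw [piAct_apply, norm_mul, norm_exp_ofReal_mul_I, one_mul]

lemma piPhase_add_piPhase (g g' : DF n) (X : Hgrp n) :
    piPhase g X + piPhase g' (hmul X g.1) = piPhase (dfmul g g') X := by
  obtain ⟨⟨u, v, w⟩, ⟨x, y, z⟩, s⟩ := g
  obtain ⟨⟨u', v', w'⟩, ⟨x', y', z'⟩, s'⟩ := g'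
  obtain ⟨a, b, c⟩ := X
  simp only [piPhase, dfmul, hmul, hinner, hbr, adstar, hdot_eq_dotProduct, Prod.smul_mk,
    Prod.mk_add_mk, Prod.mk_sub_mk, smul_eq_mul, dotProduct_add, dotProduct_smul, dotProduct_neg,
    dotProduct_sub, dotProduct_zero, dotProduct_comm]
  ring

lemma piAct_zero (l : ℝ) (f : Hgrp n → ℂ) : piAct n l 0 f = f := by
  funext X
  simp [piAct_apply, piPhase, hinner, hdot_eq_dotProduct, hmul_zero]

lemma piAct_piAct (l : ℝ) (g g' : DF n) (f : Hgrp n → ℂ) :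
    piAct n l g (piAct n l g' f) = piAct n l (dfmul g g') f := by
  funext X
  simp only [piAct_apply, ← piPhase_add_piPhase g g' X, ← mul_assoc, ← Complex.exp_add]
  rw [hmul_assoc]
  congr 3
  push_cast
  ring

end HeisenbergGroup

theorem piAct_unitary_representation_general (n : ℕ) (l : ℝ) :
    (∀ (g : DF n) (f : Hgrp n → ℂ),
      ∫ X : Hgrp n, ‖piAct n l g f X‖ ^ 2 = ∫ X : Hgrp n, ‖f X‖ ^ 2) ∧
    (∀ f : Hgrp n → ℂ, piAct n l ((0, 0, 0) : DF n) f = f) ∧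
    (∀ (g g' : DF n) (f : Hgrp n → ℂ),
      piAct n l g (piAct n l g' f) = piAct n l (dfmul g g') f) := by
  refine ⟨fun g f => ?_, piAct_zero l, piAct_piAct l⟩
  simp_rw [norm_piAct_apply]
  exact integral_comp_hmul_right g.1 fun Y => ‖f Y‖ ^ 2

/-- For `l ≠ 0`, `π_l` is a unitary representation of `𝐇_{n,2}` on `L²(ℝ^{2n+1})`:
each operator is an `L²`-isometry, `π_l` of the identity is the identity, and
`π_l(g) π_l(g') = π_l(g·g')`. -/
theorem piAct_unitary_representation (n : ℕ) (l : ℝ) (hl : l ≠ 0) :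
    (∀ (g : DF n) (f : Hgrp n → ℂ),
      ∫ X : Hgrp n, ‖piAct n l g f X‖ ^ 2 = ∫ X : Hgrp n, ‖f X‖ ^ 2) ∧
    (∀ f : Hgrp n → ℂ, piAct n l ((0, 0, 0) : DF n) f = f) ∧
    (∀ (g g' : DF n) (f : Hgrp n → ℂ),
      piAct n l g (piAct n l g' f) = piAct n l (dfmul g g') f) :=
  piAct_unitary_representation_general n l
end
end
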